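/- arXiv:2304.10445 — 2 statements merged into one kernel-verified Lean document; each statement's English description precedes it below -/
import Mathlib

section
/- A nonsingular m×m real matrix A satisfies the equivalence (x ≤ y componentwise ⇔ A x ≤ A y componentwise, for all x, y ∈ ℝ^m) if and only if A = D P for some positive diagonal matrix D and permutation matrix P. -/
/-!
A matrix inducing an order isomorphism of `ℝ^m` maps the positive cone onto itself, so both `A`
and `A⁻¹` are entrywise nonnegative. If `A * B = B * A = 1` with `A, B ≥ 0`, the off-diagonal
entries of `A * B` are sums of nonnegative terms, hence every product `A i k * B k j` with `i ≠ j`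
vanishes; this forces each row and each column of `A` to carry exactly one nonzero entry.
-/

open Matrix

/-- A permutation matrix. -/
def IsPermMatrix {m : ℕ} (P : Matrix (Fin m) (Fin m) ℝ) : Prop :=
  ∃ σ : Equiv.Perm (Fin m), ∀ i j, P i j = if j = σ i then 1 else 0

open Equiv

namespace Matrix

variable {m n R : Type*} [Fintype n] [DecidableEq n] [Field R]

theorem exists_apply_ne_zero_of_mul_eq_one {A B : Matrix n n R} (hAB : A * B = 1) (i : n) :
    ∃ k, A i k ≠ 0 := by
  have hii : (A * B) i i ≠ 0 := by simp [hAB]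
  rw [mul_apply] at hii
  obtain ⟨k, -, hk⟩ := Finset.exists_ne_zero_of_sum_ne_zero hii
  exact ⟨k, left_ne_zero_of_mul hk⟩

variable [LinearOrder R]

theorem inv_mulVec_nonneg {A : Matrix n n R} (hA : IsUnit A.det)
    (h : ∀ x, 0 ≤ A *ᵥ x → 0 ≤ x) {x : n → R} (hx : 0 ≤ x) : 0 ≤ A⁻¹ *ᵥ x :=
  h _ (by rwa [mulVec_mulVec, mul_nonsing_inv A hA, one_mulVec])

variable [IsStrictOrderedRing R]

theorem nonneg_of_mulVec_nonneg {A : Matrix m n R} (hA : ∀ x, 0 ≤ x → 0 ≤ A *ᵥ x) (i : m)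
    (j : n) : 0 ≤ A i j := by
  simpa [mulVec_single_one] using hA _ (Pi.single_nonneg.2 zero_le_one) i

theorem diagonal_mul_permMatrix_mulVec_le_iff {d : n → R} (hd : ∀ i, 0 < d i) (σ : Perm n)
    {x y : n → R} :
    (diagonal d * σ.permMatrix R) *ᵥ x ≤ (diagonal d * σ.permMatrix R) *ᵥ y ↔ x ≤ y := by
  simp only [← mulVec_mulVec, permMatrix_mulVec, mulVec_diagonal, Pi.le_def, Function.comp_apply,
    mul_le_mul_iff_of_pos_left (hd _)]
  exact σ.forall_congr_right (q := fun i => x i ≤ y i)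

section Monomial

variable {A B : Matrix n n R}

theorem apply_eq_zero_of_mul_eq_one_of_apply_ne_zero (hA : ∀ i j, 0 ≤ A i j)
    (hB : ∀ i j, 0 ≤ B i j) (hAB : A * B = 1) {i j k : n} (hik : A i k ≠ 0) (hij : i ≠ j) :
    B k j = 0 := by
  have hsum : ∑ l, A i l * B l j = 0 := by
    simpa [mul_apply, one_apply_ne hij] using congrFun (congrFun hAB i) j
  have hterm := (Finset.sum_eq_zero_iff_of_nonneg fun l _ => mul_nonneg (hA i l) (hB l j)).1 hsum
    k (Finset.mem_univ k)
  exact (mul_eq_zero.1 hterm).resolve_left hik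

theorem apply_eq_zero_of_apply_ne_zero (hA : ∀ i j, 0 ≤ A i j) (hB : ∀ i j, 0 ≤ B i j)
    (hAB : A * B = 1) (hBA : B * A = 1) {i k k' : n} (hik : A i k ≠ 0) (hk : k' ≠ k) :
    A i k' = 0 := by
  have hBA_row : ∀ l, (B * A) k l = B k i * A i l := fun l => by
    rw [mul_apply]
    refine Finset.sum_eq_single_of_mem i (Finset.mem_univ i) fun j _ hj => ?_
    rw [apply_eq_zero_of_mul_eq_one_of_apply_ne_zero hA hB hAB hik hj.symm, zero_mul]
  have hkk : B k i * A i k = 1 := by rw [← hBA_row, hBA, one_apply_eq]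
  have hkk' : B k i * A i k' = 0 := by rw [← hBA_row, hBA, one_apply_ne hk.symm]
  exact (mul_eq_zero.1 hkk').resolve_left (left_ne_zero_of_mul_eq_one hkk)

theorem eq_of_apply_ne_zero_of_apply_ne_zero (hA : ∀ i j, 0 ≤ A i j) (hB : ∀ i j, 0 ≤ B i j)
    (hAB : A * B = 1) (hBA : B * A = 1) {i i' k : n} (hik : A i k ≠ 0) (hi'k : A i' k ≠ 0) :
    i = i' := by
  by_contra hii'
  have hBk : ∀ j, B k j = 0 := fun j => by
    obtain rfl | hj := eq_or_ne j i
    · exact apply_eq_zero_of_mul_eq_one_of_apply_ne_zero hA hB hAB hi'k (Ne.symm hii')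
    · exact apply_eq_zero_of_mul_eq_one_of_apply_ne_zero hA hB hAB hik (Ne.symm hj)
  have hkk : (B * A) k k = 0 := by simp [mul_apply, hBk]
  simp [hBA] at hkk

theorem exists_perm_eq_diagonal_mul_permMatrix (hA : ∀ i j, 0 ≤ A i j)
    (hB : ∀ i j, 0 ≤ B i j) (hAB : A * B = 1) (hBA : B * A = 1) :
    ∃ σ : Perm n, (∀ i, 0 < A i (σ i)) ∧ A = diagonal (fun i => A i (σ i)) * σ.permMatrix R := by
  choose τ hτ using exists_apply_ne_zero_of_mul_eq_one hAB
  have hτ_inj : Function.Injective τ := fun i i' h =>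
    eq_of_apply_ne_zero_of_apply_ne_zero hA hB hAB hBA (hτ i) (h ▸ hτ i')
  let σ : Perm n := Equiv.ofBijective τ (Finite.injective_iff_bijective.1 hτ_inj)
  refine ⟨σ, fun i => (hA i (τ i)).lt_of_ne' (hτ i), ?_⟩
  ext i j
  rw [diagonal_mul]
  obtain rfl | hj := eq_or_ne j (τ i)
  · simp [σ]
  · simp [σ, hj.symm, apply_eq_zero_of_apply_ne_zero hA hB hAB hBA (hτ i) hj]

end Monomial

end Matrix

theorem isPermMatrix_iff {m : ℕ} {P : Matrix (Fin m) (Fin m) ℝ} :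
    IsPermMatrix P ↔ ∃ σ : Perm (Fin m), σ.permMatrix ℝ = P := by
  refine exists_congr fun σ => ?_
  rw [← Matrix.ext_iff]
  simp [toPEquiv_apply, eq_comm]

theorem order_equiv_iff_pos_diag_mul_perm {m : ℕ} (A : Matrix (Fin m) (Fin m) ℝ)
    (hA : IsUnit A.det) :
    (∀ x y : Fin m → ℝ, x ≤ y ↔ A *ᵥ x ≤ A *ᵥ y) ↔
      ∃ d : Fin m → ℝ, (∀ i, 0 < d i) ∧
        ∃ P : Matrix (Fin m) (Fin m) ℝ, IsPermMatrix P ∧ A = Matrix.diagonal d * P := by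
  constructor
  · intro h
    have hmono : ∀ x, 0 ≤ x → 0 ≤ A *ᵥ x := fun x hx => by simpa using (h 0 x).1 hx
    have hrefl : ∀ x, 0 ≤ A *ᵥ x → 0 ≤ x := fun x hx => (h 0 x).2 (by simpa using hx)
    have hA_nonneg := nonneg_of_mulVec_nonneg hmono
    have hA_inv_nonneg := nonneg_of_mulVec_nonneg fun _ => inv_mulVec_nonneg hA hrefl
    obtain ⟨σ, hσ, hA_eq⟩ := exists_perm_eq_diagonal_mul_permMatrix hA_nonneg hA_inv_nonneg
      (mul_nonsing_inv A hA) (nonsing_inv_mul A hA)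
    exact ⟨_, hσ, _, isPermMatrix_iff.2 ⟨σ, rfl⟩, hA_eq⟩
  · rintro ⟨d, hd, P, hP, rfl⟩ x y
    obtain ⟨σ, rfl⟩ := isPermMatrix_iff.1 hP
    exact (diagonal_mul_permMatrix_mulVec_le_iff hd σ).symm
end

section
/- Let Y be a random vector in ℝ^m with a strictly positive density on ℝ^m. If A is a nonsingular matrix with ℙ(Y ≤ y) = ℙ(A Y ≤ A y) for all y ∈ ℝ^m, then A = D P with D a positive diagonal matrix and P a permutation matrix. -/
open Matrix MeasureTheory ENNReal Filter

/-- Tail lemma: for a measurable real function, the measure of `{g ≤ c}` can be made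
arbitrarily small. -/
lemma exists_tail_lt {Ω : Type*} [MeasurableSpace Ω] (μ : Measure Ω) [IsProbabilityMeasure μ]
    (g : Ω → ℝ) (hg : Measurable g) (p : ℝ≥0∞) (hp : 0 < p) :
    ∃ c : ℝ, μ {ω | g ω ≤ c} < p := by
  have hmeas : ∀ n : ℕ, NullMeasurableSet {ω | g ω ≤ -(n : ℝ)} μ :=
    fun n => (hg measurableSet_Iic).nullMeasurableSet
  have hanti : Antitone fun n : ℕ => {ω | g ω ≤ -(n : ℝ)} := by
    intro a b hab ω hω
    simp only [Set.mem_setOf_eq] at *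
    have : -(b : ℝ) ≤ -(a : ℝ) := by exact_mod_cast neg_le_neg (by exact_mod_cast hab)
    linarith
  have hfin : ∃ n : ℕ, μ {ω | g ω ≤ -(n : ℝ)} ≠ ∞ := ⟨0, measure_ne_top _ _⟩
  have hiInter : (⋂ n : ℕ, {ω | g ω ≤ -(n : ℝ)}) = ∅ := by
    ext ω
    simp only [Set.mem_iInter, Set.mem_setOf_eq, Set.mem_empty_iff_false, iff_false, not_forall]
    obtain ⟨n, hn⟩ := exists_nat_gt (-(g ω))
    exact ⟨n, by push_neg; linarith⟩
  have htendsto := tendsto_measure_iInter_atTop hmeas hanti hfin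
  rw [hiInter, measure_empty] at htendsto
  obtain ⟨n, hn⟩ := (htendsto.eventually_lt_const hp).exists
  exact ⟨-(n : ℝ), hn⟩

theorem cdf_invariance_forces_pos_diag_perm {m : ℕ} {Ω : Type*} [MeasurableSpace Ω]
    (μ : Measure Ω) [IsProbabilityMeasure μ]
    (Y : Ω → Fin m → ℝ) (hY : Measurable Y)
    (f : (Fin m → ℝ) → ℝ≥0∞) (hf : ∀ x, 0 < f x) (hf' : ∀ x, f x < ⊤)
    (hlaw : Measure.map Y μ = volume.withDensity f)
    (A : Matrix (Fin m) (Fin m) ℝ) (hA : IsUnit A.det)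
    (hcdf : ∀ y : Fin m → ℝ, μ {ω | Y ω ≤ y} = μ {ω | A *ᵥ Y ω ≤ A *ᵥ y}) :
    ∃ d : Fin m → ℝ, (∀ i, 0 < d i) ∧
      ∃ P : Matrix (Fin m) (Fin m) ℝ, IsPermMatrix P ∧ A = Matrix.diagonal d * P := by
  -- Step 1: there is a base point y₀ with μ {Y ≤ y₀} > 0.
  have hbase : ∃ y₀ : Fin m → ℝ, 0 < μ {ω | Y ω ≤ y₀} := by
    by_contra h
    push_neg at h
    have h0 : ∀ n : ℕ, μ {ω | Y ω ≤ fun _ => (n : ℝ)} = 0 := by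
      intro n; exact le_antisymm (h _) zero_le
    have hunion : (⋃ n : ℕ, {ω | Y ω ≤ fun _ => (n : ℝ)}) = Set.univ := by
      ext ω
      simp only [Set.mem_iUnion, Set.mem_setOf_eq, Set.mem_univ, iff_true]
      obtain ⟨M, hM⟩ := Finite.exists_le (fun i => Y ω i)
      obtain ⟨n, hn⟩ := exists_nat_ge M
      exact ⟨n, fun i => (hM i).trans hn⟩
    have := measure_iUnion_null (s := fun n : ℕ => {ω | Y ω ≤ fun _ => (n : ℝ)}) h0
    rw [hunion, measure_univ] at this
    exact one_ne_zero this
  obtain ⟨y₀, hy₀⟩ := hbase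
  -- measurability helpers
  have hYi : ∀ i : Fin m, Measurable fun ω => Y ω i :=
    fun i => (measurable_pi_apply i).comp hY
  have hAYi : ∀ i : Fin m, Measurable fun ω => (A *ᵥ Y ω) i := by
    intro i
    simp only [Matrix.mulVec, dotProduct]
    exact Finset.measurable_sum _ fun j _ => (hYi j).const_mul (A i j)
  -- Step 2: the order-isomorphism property.
  have horth : ∀ u : Fin m → ℝ, 0 ≤ u ↔ 0 ≤ A *ᵥ u := by
    intro u
    constructor
    · intro hu
      by_contra hAu
      rw [Pi.le_def] at hAu; push_neg at hAu
      obtain ⟨i, hi⟩ := hAu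
      simp only [Pi.zero_apply] at hi
      obtain ⟨c, hc⟩ := exists_tail_lt μ (fun ω => (A *ᵥ Y ω) i) (hAYi i) _ hy₀
      set t : ℝ := max 0 ((c - (A *ᵥ y₀) i) / (A *ᵥ u) i) with ht
      have ht0 : 0 ≤ t := le_max_left _ _
      have htc : (A *ᵥ y₀) i + t * (A *ᵥ u) i ≤ c := by
        rcases max_cases 0 ((c - (A *ᵥ y₀) i) / (A *ᵥ u) i) with ⟨h1, h2⟩ | ⟨h1, h2⟩
        · -- t = 0, ratio ≤ 0 means c - (A y₀) i ≥ 0  (dividing by negative)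
          rw [ht, h1]
          have : 0 ≤ c - (A *ᵥ y₀) i := by
            rw [div_nonpos_iff] at h2
            rcases h2 with ⟨h3, h4⟩ | ⟨h3, h4⟩
            · linarith
            · linarith [h4.trans_lt hi]
          linarith
        · rw [ht, h1, div_mul_cancel₀ _ (ne_of_lt hi)]
          linarith
      have hle1 : μ {ω | Y ω ≤ y₀} ≤ μ {ω | Y ω ≤ y₀ + t • u} := by
        apply measure_mono
        intro ω hω
        have : y₀ ≤ y₀ + t • u := by
          intro j
          have : 0 ≤ t * u j := mul_nonneg ht0 (hu j)
          simp only [Pi.add_apply, Pi.smul_apply, smul_eq_mul]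
          linarith
        exact le_trans hω this
      have hle2 : μ {ω | A *ᵥ Y ω ≤ A *ᵥ (y₀ + t • u)} ≤ μ {ω | (fun ω => (A *ᵥ Y ω) i) ω ≤ c} := by
        apply measure_mono
        intro ω hω
        have h1 := hω i
        rw [Matrix.mulVec_add, Matrix.mulVec_smul] at h1
        simp only [Pi.add_apply, Pi.smul_apply, smul_eq_mul] at h1
        simp only [Set.mem_setOf_eq]
        linarith
      rw [hcdf (y₀ + t • u)] at hle1
      exact lt_irrefl _ ((hle1.trans hle2).trans_lt hc)
    · intro hAu
      by_contra hu
      rw [Pi.le_def] at hu; push_neg at hu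
      obtain ⟨i, hi⟩ := hu
      simp only [Pi.zero_apply] at hi
      obtain ⟨c, hc⟩ := exists_tail_lt μ (fun ω => Y ω i) (hYi i) _ hy₀
      set t : ℝ := max 0 ((c - y₀ i) / u i) with ht
      have ht0 : 0 ≤ t := le_max_left _ _
      have htc : y₀ i + t * u i ≤ c := by
        rcases max_cases 0 ((c - y₀ i) / u i) with ⟨h1, h2⟩ | ⟨h1, h2⟩
        · rw [ht, h1]
          have : 0 ≤ c - y₀ i := by
            rw [div_nonpos_iff] at h2
            rcases h2 with ⟨h3, h4⟩ | ⟨h3, h4⟩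
            · linarith
            · linarith
          linarith
        · rw [ht, h1, div_mul_cancel₀ _ (ne_of_lt hi)]
          linarith
      have hle1 : μ {ω | A *ᵥ Y ω ≤ A *ᵥ y₀} ≤ μ {ω | A *ᵥ Y ω ≤ A *ᵥ (y₀ + t • u)} := by
        apply measure_mono
        intro ω hω
        have : A *ᵥ y₀ ≤ A *ᵥ (y₀ + t • u) := by
          rw [Matrix.mulVec_add, Matrix.mulVec_smul]
          intro j
          have h1 : 0 ≤ t * (A *ᵥ u) j := mul_nonneg ht0 (hAu j)
          simp only [Pi.add_apply, Pi.smul_apply, smul_eq_mul]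
          linarith
        exact le_trans hω this
      have hle2 : μ {ω | Y ω ≤ y₀ + t • u} ≤ μ {ω | (fun ω => Y ω i) ω ≤ c} := by
        apply measure_mono
        intro ω hω
        have h1 := hω i
        simp only [Pi.add_apply, Pi.smul_apply, smul_eq_mul] at h1
        simp only [Set.mem_setOf_eq]
        linarith
      rw [← hcdf y₀] at hle1
      rw [← hcdf (y₀ + t • u)] at hle1
      exact lt_irrefl _ ((hle1.trans hle2).trans_lt hc)
  -- Step 3: matrix algebra.
  have hABone : A * A⁻¹ = 1 := Matrix.mul_nonsing_inv A hA
  have hBAone : A⁻¹ * A = 1 := Matrix.nonsing_inv_mul A hA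
  have hAnn : ∀ i j, 0 ≤ A i j := by
    intro i j
    have hu : (0 : Fin m → ℝ) ≤ Pi.single j 1 := by
      intro k
      rcases eq_or_ne k j with rfl | h
      · simp
      · simp [Pi.single_eq_of_ne h]
    have := (horth (Pi.single j 1)).mp hu i
    simpa using this
  have hBnn : ∀ i j, 0 ≤ A⁻¹ i j := by
    intro i j
    have hu : (0 : Fin m → ℝ) ≤ Pi.single j 1 := by
      intro k
      rcases eq_or_ne k j with rfl | h
      · simp
      · simp [Pi.single_eq_of_ne h]
    have hAu : 0 ≤ A *ᵥ (A⁻¹ *ᵥ Pi.single j 1) := by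
      rw [Matrix.mulVec_mulVec, hABone, Matrix.one_mulVec]
      exact hu
    have := (horth (A⁻¹ *ᵥ Pi.single j 1)).mpr hAu i
    simpa using this
  have key : ∀ i : Fin m, ∃ k, 0 < A i k ∧ 0 < A⁻¹ k i ∧ ∀ j, j ≠ k → A i j = 0 := by
    intro i
    have hsum : (∑ k, A i k * A⁻¹ k i) = 1 := by
      have := congrArg (fun M => M i i) hABone
      simpa [Matrix.mul_apply] using this
    obtain ⟨k, -, hk⟩ := Finset.exists_ne_zero_of_sum_ne_zero (by rw [hsum]; norm_num :
      (∑ k, A i k * A⁻¹ k i) ≠ 0)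
    have hAik : 0 < A i k := lt_of_le_of_ne (hAnn i k) (fun h => hk (by rw [← h]; ring))
    have hBki : 0 < A⁻¹ k i := lt_of_le_of_ne (hBnn k i) (fun h => hk (by rw [← h]; ring))
    refine ⟨k, hAik, hBki, fun j hj => ?_⟩
    have hsum0 : (∑ l, A⁻¹ k l * A l j) = 0 := by
      have := congrArg (fun M => M k j) hBAone
      simpa [Matrix.mul_apply, Matrix.one_apply, Ne.symm hj] using this
    have hterm : A⁻¹ k i * A i j = 0 := by
      have := (Finset.sum_eq_zero_iff_of_nonneg
        (fun l _ => mul_nonneg (hBnn k l) (hAnn l j))).mp hsum0 i (Finset.mem_univ i)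
      exact this
    rcases mul_eq_zero.mp hterm with h | h
    · exact absurd h (ne_of_gt hBki)
    · exact h
  choose σ0 hA1 hB1 hz using key
  have hinj : Function.Injective σ0 := by
    intro i i' hii'
    by_contra hne
    have hsum : (∑ j, A i j * A⁻¹ j i') = 0 := by
      have := congrArg (fun M => M i i') hABone
      simpa [Matrix.mul_apply, Matrix.one_apply, hne] using this
    have heq : (∑ j, A i j * A⁻¹ j i') = A i (σ0 i) * A⁻¹ (σ0 i) i' := by
      apply Finset.sum_eq_single
      · intro j _ hj
        rw [hz i j hj, zero_mul]
      · intro h; exact absurd (Finset.mem_univ _) h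
    rw [heq] at hsum
    rcases mul_eq_zero.mp hsum with h | h
    · exact absurd h (ne_of_gt (hA1 i))
    · rw [hii'] at h
      exact absurd h (ne_of_gt (hB1 i'))
  have hbij : Function.Bijective σ0 := Finite.injective_iff_bijective.mp hinj
  refine ⟨fun i => A i (σ0 i), fun i => hA1 i, Matrix.of fun i j => if j = σ0 i then 1 else 0,
    ⟨Equiv.ofBijective σ0 hbij, fun i j => rfl⟩, ?_⟩
  ext i j
  rw [Matrix.diagonal_mul]
  simp only [Matrix.of_apply]
  rcases eq_or_ne j (σ0 i) with rfl | h
  · simp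
  · simp [h, hz i j h]
end
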